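/- arXiv:2011.13015 — 5 statements merged into one kernel-verified Lean document; each statement's English description precedes it below -/
import Mathlib

section
/- Let a, b be real numbers with 0 < a and b < 10a. Then no real-valued random variable X whose range is contained in [a, b] (i.e., P(a ≤ X ≤ b) = 1) is Benford. -/
open MeasureTheory

/-- The decimal significand: for `x ≠ 0`, the unique `t ∈ [1,10)` with
`|x| = 10^k * t` for some integer `k`; `signif 0 = 0`. -/
noncomputable def signif (x : ℝ) : ℝ :=
  if x = 0 then 0 else |x| * (10 : ℝ) ^ (-⌊Real.logb 10 |x|⌋)

/-- A real random variable `X` on `(Ω, μ)` is Benford if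
`P(S(|X|) ≤ t) = log₁₀ t` for all `t ∈ [1,10)`. -/
def IsBenford {Ω : Type*} [MeasurableSpace Ω] (μ : Measure Ω) (X : Ω → ℝ) : Prop :=
  ∀ t ∈ Set.Ico (1 : ℝ) 10,
    μ {ω | signif |X ω| ≤ t} = ENNReal.ofReal (Real.logb 10 t)

/-!
Going up from `x` to `y ≥ x`, the significand either does not increase (no power of ten is
crossed) or drops by a factor of at least `10 x / y`. For `x ∈ [a, b]` this factor is at least
`10 a / b > 1`, so `S(X)` almost surely avoids the interval `(S(b), min (S(b) · 10a/b) 10)`, to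
which a Benford variable gives the positive probability `log₁₀` of the ratio of its endpoints.
-/

lemma signif_eq_rpow_fract {x : ℝ} (hx : 0 < x) :
    signif x = 10 ^ Int.fract (Real.logb 10 x) := by
  rw [signif, if_neg hx.ne', abs_of_pos hx, Int.fract, Real.rpow_sub (by norm_num),
    Real.rpow_logb (by norm_num) (by norm_num) hx, Real.rpow_intCast, zpow_neg, div_eq_mul_inv]

lemma signif_mem_Ico {x : ℝ} (hx : 0 < x) : signif x ∈ Set.Ico (1 : ℝ) 10 := by
  rw [signif_eq_rpow_fract hx]
  refine ⟨Real.one_le_rpow (by norm_num) (Int.fract_nonneg _), ?_⟩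
  simpa using (Real.rpow_lt_rpow_left_iff (by norm_num : (1 : ℝ) < 10)).mpr (Int.fract_lt_one _)

lemma signif_le_signif_or_ten_mul_mul_signif_le {x y : ℝ} (hx : 0 < x) (hxy : x ≤ y) :
    signif x ≤ signif y ∨ 10 * x * signif y ≤ y * signif x := by
  have hy : 0 < y := hx.trans_le hxy
  simp only [signif, if_neg hx.ne', if_neg hy.ne', abs_of_pos hx, abs_of_pos hy]
  set m := ⌊Real.logb 10 x⌋
  set n := ⌊Real.logb 10 y⌋
  have hmn : m ≤ n := Int.floor_mono (Real.logb_le_logb_of_le (by norm_num) hx hxy)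
  rcases hmn.eq_or_lt with hmn | hmn
  · left
    rw [hmn]
    gcongr
  · right
    have : (10 : ℝ) * 10 ^ (-n) ≤ 10 ^ (-m) := by
      rw [mul_comm, ← zpow_add_one₀ (by norm_num)]
      exact zpow_le_zpow_right₀ (by norm_num) (by omega)
    calc 10 * x * (y * 10 ^ (-n)) = y * (x * (10 * 10 ^ (-n))) := by ring
      _ ≤ y * (x * 10 ^ (-m)) := by gcongr

/-- If `0 < a` and `b < 10a`, then no random variable with range contained in
`[a,b]` is Benford. -/
theorem no_benford_of_range_lt_one_order
    {Ω : Type*} [MeasurableSpace Ω] (μ : Measure Ω) [IsProbabilityMeasure μ]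
    (X : Ω → ℝ) (hX : Measurable X) (a b : ℝ) (ha : 0 < a) (hb : b < 10 * a)
    (hrange : μ {ω | a ≤ X ω ∧ X ω ≤ b} = 1) :
    ¬ IsBenford μ X := by
  intro hB
  have hae : ∀ᵐ ω ∂μ, X ω ∈ Set.Icc a b :=
    (mem_ae_iff_prob_eq_one (hX measurableSet_Icc)).mpr hrange
  obtain ⟨ω₀, haω₀, hω₀b⟩ := hae.exists
  have hb0 : 0 < b := ha.trans_le (haω₀.trans hω₀b)
  set c := signif b
  obtain ⟨hc1, hc10⟩ := signif_mem_Ico hb0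
  obtain ⟨t, hct, ht⟩ :=
    exists_between (lt_min (lt_mul_left (by linarith) ((one_lt_div hb0).mpr hb)) hc10)
  obtain ⟨ht_lt_ratio, ht10⟩ := lt_min_iff.mp ht
  have hbt : b * t < 10 * a * c := by
    calc b * t < b * (10 * a / b * c) := by gcongr
      _ = 10 * a * c := by field_simp
  have hgap : {ω | signif |X ω| ≤ t} ≤ᵐ[μ] {ω | signif |X ω| ≤ c} := by
    filter_upwards [hae] with ω ⟨hax, hxb⟩ hxt
    have hx : 0 < X ω := ha.trans_le hax
    change signif |X ω| ≤ t at hxt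
    show signif |X ω| ≤ c
    rw [abs_of_pos hx] at hxt ⊢
    refine (signif_le_signif_or_ten_mul_mul_signif_le hx hxb).resolve_right fun h => ?_
    nlinarith
  have hle := measure_mono_ae hgap
  rw [hB t ⟨hc1.trans hct.le, ht10⟩, hB c ⟨hc1, hc10⟩,
    ENNReal.ofReal_le_ofReal_iff (Real.logb_nonneg (by norm_num) hc1)] at hle
  exact hle.not_gt (Real.logb_lt_logb (by norm_num) (by linarith) hct)
end

section
/- Let a, b be real numbers with b > 10a > 0, and let c ∈ (0, b/10 − a). If U is uniformly distributed on [0,1], then the random variable X_c = (a + c) · 10^U has range contained in [a, b] and is Benford. -/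
open MeasureTheory

/-- `U` is uniformly distributed on `[a,b]`: its CDF is `(x-a)/(b-a)` on `[a,b]`. -/
def IsUniformOn {Ω : Type*} [MeasurableSpace Ω] (μ : Measure Ω) (U : Ω → ℝ)
    (a b : ℝ) : Prop :=
  ∀ x ∈ Set.Icc a b, μ {ω | U ω ≤ x} = ENNReal.ofReal ((x - a) / (b - a))

/-!
The significand of `X = P · 10^U` is `10^{log₁₀|P| + U mod 1}`, so `S(X) ≤ t` iff the fractional
part of `log₁₀|P| + U` is at most `log₁₀ t`. Rotating `[0,1]` by `θ` modulo `1` preserves Lebesgue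
measure, because `(θ, θ + 1]` is a fundamental domain of `ℤ` acting on `ℝ` just as `(0, 1]` is;
hence that fractional part is again uniform on `[0,1]` and `P(S(X) ≤ t) = log₁₀ t`.
For the range, `a ≤ a + c ≤ X ≤ 10 (a + c) < b` whenever `U ∈ [0,1]`.
-/

open Set ProbabilityTheory

theorem IsUniformOn.isUniform {Ω : Type*} [MeasurableSpace Ω] {μ : Measure Ω}
    [IsProbabilityMeasure μ] {U : Ω → ℝ} {a b : ℝ} (hU : Measurable U) (hab : a < b)
    (h : IsUniformOn μ U a b) : pdf.IsUniform U (Icc a b) μ := by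
  have hvol : volume (Icc a b) ≠ 0 := by simpa using hab
  have : IsProbabilityMeasure (volume[|Icc a b]) :=
    cond_isProbabilityMeasure_of_finite hvol measure_Icc_lt_top.ne
  have : IsProbabilityMeasure (μ.map U) := Measure.isProbabilityMeasure_map hU.aemeasurable
  refine Measure.ext_of_Iic _ _ fun x => ?_
  rw [Measure.map_apply hU measurableSet_Iic, cond_apply measurableSet_Icc]
  rcases lt_or_ge x a with hxa | hax
  · have hle : μ (U ⁻¹' Iic x) ≤ μ {ω | U ω ≤ a} := measure_mono fun ω hω => le_trans hω hxa.le
    have hempty : Icc a b ∩ Iic x = ∅ := eq_empty_of_forall_notMem fun y hy => by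
      linarith [hy.1.1, hy.2.out]
    rw [h a ⟨le_rfl, hab.le⟩, sub_self, zero_div, ENNReal.ofReal_zero] at hle
    rw [hempty, measure_empty, mul_zero]
    exact nonpos_iff_eq_zero.1 hle
  rcases le_or_gt x b with hxb | hbx
  · have hinter : Icc a b ∩ Iic x = Icc a x := by
      ext y
      simp only [mem_inter_iff, mem_Icc, mem_Iic]
      exact ⟨fun hy => ⟨hy.1.1, hy.2⟩, fun hy => ⟨⟨hy.1, hy.2.trans hxb⟩, hy.2⟩⟩
    rw [hinter, Real.volume_Icc, Real.volume_Icc, ← ENNReal.div_eq_inv_mul,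
      ← ENNReal.ofReal_div_of_pos (sub_pos.2 hab)]
    exact h x ⟨hax, hxb⟩
  · have hge : μ {ω | U ω ≤ b} ≤ μ (U ⁻¹' Iic x) := measure_mono fun ω hω => le_trans hω hbx.le
    have hinter : Icc a b ∩ Iic x = Icc a b := inter_eq_left.2 fun y hy => hy.2.trans hbx.le
    rw [h b ⟨hab.le, le_rfl⟩, div_self (sub_pos.2 hab).ne', ENNReal.ofReal_one] at hge
    rw [hinter, ENNReal.inv_mul_cancel hvol measure_Icc_lt_top.ne]
    exact le_antisymm prob_le_one hge

theorem measurePreserving_fract_const_add (θ : ℝ) :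
    MeasurePreserving (fun u => Int.fract (θ + u)) (volume.restrict (Icc 0 1))
      (volume.restrict (Icc 0 1)) := by
  have hf : Measurable fun u : ℝ => Int.fract (θ + u) :=
    measurable_fract.comp (measurable_const_add θ)
  refine ⟨hf, Measure.ext fun B hB => ?_⟩
  rw [Measure.map_apply hf hB, Measure.restrict_apply (hf hB), Measure.restrict_apply hB]
  set A := Int.fract ⁻¹' B
  have hA : ∀ g : AddSubgroup.zmultiples (1 : ℝ), (fun x => g +ᵥ x) ⁻¹' A = A := by
    rintro ⟨_, n, rfl⟩
    ext x
    simp [A, Int.fract_intCast_add]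
  calc volume ((fun u => Int.fract (θ + u)) ⁻¹' B ∩ Icc 0 1)
      = volume ((θ + ·) ⁻¹' (A ∩ Ioc θ (θ + 1))) := by
        rw [← measure_congr ((Filter.EventuallyEq.refl _ _).inter Ioc_ae_eq_Icc)]
        congr 1
        ext u
        simp [A]
    _ = volume (A ∩ Ioc θ (θ + 1)) := measure_preimage_add _ _ _
    _ = volume (A ∩ Ioc 0 (0 + 1)) :=
        (isAddFundamentalDomain_Ioc one_pos θ).measure_set_eq
          (isAddFundamentalDomain_Ioc one_pos 0) (measurable_fract hB) hA
    _ = volume (B ∩ Ico 0 1) := by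
        rw [zero_add, ← measure_congr ((Filter.EventuallyEq.refl _ _).inter Ico_ae_eq_Ioc)]
        congr 1
        ext x
        simp only [A, mem_inter_iff, mem_preimage, mem_Ico, and_congr_left_iff]
        exact fun hx => by rw [Int.fract_eq_self.2 hx]
    _ = volume (B ∩ Icc 0 1) := measure_congr ((Filter.EventuallyEq.refl _ _).inter Ico_ae_eq_Icc)

theorem signif_eq_rpow_fract_logb {x : ℝ} (hx : 0 < x) :
    signif x = (10 : ℝ) ^ Int.fract (Real.logb 10 x) := by
  rw [signif, if_neg hx.ne', abs_of_pos hx, Int.fract, Real.rpow_sub (by norm_num),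
    Real.rpow_logb (by norm_num) (by norm_num) hx, Real.rpow_intCast, zpow_neg, div_eq_mul_inv]

theorem signif_le_iff {x t : ℝ} (hx : 0 < x) (ht : 0 < t) :
    signif x ≤ t ↔ Int.fract (Real.logb 10 x) ≤ Real.logb 10 t := by
  rw [signif_eq_rpow_fract_logb hx, Real.le_logb_iff_rpow_le (by norm_num) ht]

theorem MeasureTheory.pdf.IsUniform.fract_const_add {Ω : Type*} [MeasurableSpace Ω]
    {μ : Measure Ω} {U : Ω → ℝ} (hu : pdf.IsUniform U (Icc 0 1) μ) (θ : ℝ) :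
    pdf.IsUniform (fun ω => Int.fract (θ + U ω)) (Icc 0 1) μ := by
  have hU := hu.aemeasurable (by simp) (by simp)
  have hcond : volume[|Icc (0 : ℝ) 1] = volume.restrict (Icc 0 1) := by
    rw [ProbabilityTheory.cond, Real.volume_Icc, sub_zero, ENNReal.ofReal_one, inv_one, one_smul]
  have hrot := measurePreserving_fract_const_add θ
  unfold pdf.IsUniform at hu ⊢
  rw [hcond] at hu ⊢
  calc μ.map (fun ω => Int.fract (θ + U ω))
      = (μ.map U).map (fun u => Int.fract (θ + u)) :=
        (hrot.measurable.aemeasurable.map_map_of_aemeasurable hU).symm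
    _ = volume.restrict (Icc 0 1) := by rw [hu, hrot.map_eq]

theorem isBenford_mul_rpow_of_isUniform {Ω : Type*} [MeasurableSpace Ω] {μ : Measure Ω}
    {U : Ω → ℝ} (hu : pdf.IsUniform U (Icc 0 1) μ) {P : ℝ} (hP : P ≠ 0) :
    IsBenford μ (fun ω => P * (10 : ℝ) ^ U ω) := by
  rintro t ⟨ht1, ht10⟩
  set s := Real.logb 10 t
  have hs0 : 0 ≤ s := Real.logb_nonneg (by norm_num) ht1
  have hs1 : s ≤ 1 := by
    rw [Real.logb_le_iff_le_rpow (by norm_num) (by linarith), Real.rpow_one]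
    exact ht10.le
  have hevent : {ω | signif |P * (10 : ℝ) ^ U ω| ≤ t} =
      (fun ω => Int.fract (Real.logb 10 |P| + U ω)) ⁻¹' Iic s := by
    ext ω
    have hpow : 0 < (10 : ℝ) ^ U ω := Real.rpow_pos_of_pos (by norm_num) _
    rw [mem_ofPred_eq, abs_mul, abs_of_pos hpow,
      signif_le_iff (mul_pos (abs_pos.2 hP) hpow) (by linarith),
      Real.logb_mul (abs_ne_zero.2 hP) hpow.ne', Real.logb_rpow (by norm_num) (by norm_num)]
    rfl
  have hcut : Icc 0 1 ∩ Iic s = Icc 0 s := by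
    rw [← Ici_inter_Iic, inter_assoc, Iic_inter_Iic, min_eq_right hs1, Ici_inter_Iic]
  rw [hevent, (hu.fract_const_add _).measure_preimage (by simp) (by simp) measurableSet_Iic, hcut]
  simp

theorem benford_with_range_in_Icc_general
    {Ω : Type*} [MeasurableSpace Ω] (μ : Measure Ω) [IsProbabilityMeasure μ]
    (a b : ℝ) (ha : 0 < 10 * a)
    (c : ℝ) (hc : c ∈ Set.Ioo 0 (b / 10 - a))
    (U : Ω → ℝ) (hU : Measurable U) (hunif : IsUniformOn μ U 0 1) :
    μ {ω | (a + c) * (10 : ℝ) ^ (U ω) ∈ Set.Icc a b} = 1 ∧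
      IsBenford μ (fun ω => (a + c) * (10 : ℝ) ^ (U ω)) := by
  obtain ⟨hc0, hcb⟩ := hc
  have hP : 0 < a + c := by linarith
  have hu := hunif.isUniform hU zero_lt_one
  have hU01 : μ (U ⁻¹' Icc 0 1) = 1 := by
    rw [hu.measure_preimage (by simp) (by simp) measurableSet_Icc, inter_self,
      ENNReal.div_self (by simp) (by simp)]
  refine ⟨le_antisymm prob_le_one ?_, isBenford_mul_rpow_of_isUniform hu hP.ne'⟩
  refine hU01.symm.trans_le (measure_mono fun ω ⟨hu0, hu1⟩ => ⟨?_, ?_⟩)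
  · have : 1 ≤ (10 : ℝ) ^ U ω := Real.one_le_rpow (by norm_num) hu0
    nlinarith
  · have : (10 : ℝ) ^ U ω ≤ 10 := by
      simpa using Real.rpow_le_rpow_of_exponent_le (by norm_num : (1 : ℝ) ≤ 10) hu1
    nlinarith

/-- If `b > 10a > 0` and `c ∈ (0, b/10 − a)`, then `X_c = (a+c) · 10^U`
(with `U` uniform on `[0,1]`) has range contained in `[a, b]` and is Benford. -/
theorem benford_with_range_in_Icc
    {Ω : Type*} [MeasurableSpace Ω] (μ : Measure Ω) [IsProbabilityMeasure μ]
    (a b : ℝ) (hab : 10 * a < b) (ha : 0 < 10 * a)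
    (c : ℝ) (hc : c ∈ Set.Ioo 0 (b / 10 - a))
    (U : Ω → ℝ) (hU : Measurable U) (hunif : IsUniformOn μ U 0 1) :
    μ {ω | (a + c) * (10 : ℝ) ^ (U ω) ∈ Set.Icc a b} = 1 ∧
      IsBenford μ (fun ω => (a + c) * (10 : ℝ) ^ (U ω)) :=
  benford_with_range_in_Icc_general μ a b ha c hc U hU hunif
end

section
/- Let a, b be real numbers with b > 10a > 0, and let c ∈ (0, b − 10a). Then the random variable Y_c uniformly distributed on [a + c, 10a + c] has range contained in [a, b] and is not Benford. -/
/-!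
Let `Y` be uniform on `[L, R]` with `0 < L < R < 10 L`, and `10 ^ n ≤ R < 10 ^ (n + 1)`. A point
`y ∈ (L, R]` either lies in the same decade as `R`, and then `S(y) ≤ S(R)`, or in a lower one, and
then `S(y) ≥ y / 10 ^ (n - 1) > 10 L / 10 ^ n`. Since `R < 10 L`, the gap `(S(R), 10 L / 10 ^ n)`
is nonempty and `S(Y)` almost surely avoids it, so the distribution function of `S(Y)` is flat
there while `log₁₀` is strictly increasing.
-/

open MeasureTheory

open Set Filter

lemma signif_eq_div_zpow_log {y : ℝ} (hy : 0 < y) : signif y = y / 10 ^ Int.log 10 y := by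
  have hlog : ⌊Real.logb 10 y⌋ = Int.log 10 y := by
    exact_mod_cast Real.floor_logb_natCast (b := 10) hy.le
  rw [signif, if_neg hy.ne', abs_of_pos hy, hlog, zpow_neg, div_eq_mul_inv]

lemma signif_mem_Ico_s4 {y : ℝ} (hy : 0 < y) : signif y ∈ Ico 1 10 := by
  have hpos : (0 : ℝ) < 10 ^ Int.log 10 y := by positivity
  have hlow : (10 : ℝ) ^ Int.log 10 y ≤ y := by
    exact_mod_cast Int.zpow_log_le_self (b := 10) (by norm_num) hy
  have hhigh : y < (10 : ℝ) ^ Int.log 10 y * 10 := by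
    rw [← zpow_add_one₀ (by norm_num)]
    exact_mod_cast Int.lt_zpow_succ_log_self (b := 10) (by norm_num) y
  rw [signif_eq_div_zpow_log hy, mem_Ico, le_div_iff₀ hpos, div_lt_iff₀ hpos, one_mul]
  exact ⟨hlow, by linarith⟩

lemma signif_le_or_lt_of_mem_Ioc {L R y : ℝ} (hL : 0 < L) (hy : y ∈ Ioc L R) :
    signif y ≤ signif R ∨ 10 * L / 10 ^ Int.log 10 R < signif y := by
  have hy0 : 0 < y := hL.trans hy.1
  rw [signif_eq_div_zpow_log hy0, signif_eq_div_zpow_log (hy0.trans_le hy.2)]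
  rcases (Int.log_mono_right hy0 hy.2 : Int.log 10 y ≤ Int.log 10 R).eq_or_lt with heq | hlt
  · left
    rw [heq]
    exact div_le_div_of_nonneg_right hy.2 (by positivity)
  · right
    have hdecade : (10 : ℝ) ^ Int.log 10 y * 10 ≤ 10 ^ Int.log 10 R := by
      rw [← zpow_add_one₀ (by norm_num)]
      exact zpow_le_zpow_right₀ (by norm_num) hlt
    rw [div_lt_div_iff₀ (by positivity) (by positivity)]
    nlinarith [hy.1, (by positivity : (0 : ℝ) < 10 ^ Int.log 10 y)]

section

variable {Ω : Type*} [MeasurableSpace Ω] {μ : Measure Ω}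

lemma not_isBenford_of_measure_signif_le_eq {X : Ω → ℝ} {t₁ t₂ : ℝ} (h₁ : 1 ≤ t₁)
    (h₁₂ : t₁ < t₂) (h₂ : t₂ < 10)
    (h : μ {ω | signif |X ω| ≤ t₁} = μ {ω | signif |X ω| ≤ t₂}) : ¬ IsBenford μ X := by
  intro hX
  rw [hX t₁ ⟨h₁, h₁₂.trans h₂⟩, hX t₂ ⟨h₁.trans h₁₂.le, h₂⟩,
    ENNReal.ofReal_eq_ofReal_iff (Real.logb_nonneg (by norm_num) h₁)
      (Real.logb_nonneg (by norm_num) (h₁.trans h₁₂.le))] at h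
  exact (Real.logb_lt_logb (by norm_num) (by linarith) h₁₂).ne h

variable [IsProbabilityMeasure μ] {U : Ω → ℝ} {a b : ℝ}

lemma IsUniformOn.ae_mem_Ioc (hU : Measurable U) (h : IsUniformOn μ U a b) (hab : a < b) :
    ∀ᵐ ω ∂μ, U ω ∈ Ioc a b := by
  have hle : ∀ᵐ ω ∂μ, U ω ≤ b := by
    refine (mem_ae_iff_prob_eq_one (hU measurableSet_Iic)).2 ?_
    change μ {ω | U ω ≤ b} = 1
    rw [h b ⟨hab.le, le_rfl⟩, div_self (sub_pos.2 hab).ne', ENNReal.ofReal_one]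
  have hgt : ∀ᵐ ω ∂μ, a < U ω := by
    simp only [ae_iff, not_lt]
    rw [h a ⟨le_rfl, hab.le⟩, sub_self, zero_div, ENNReal.ofReal_zero]
  filter_upwards [hgt, hle] with ω h₁ h₂ using ⟨h₁, h₂⟩

lemma IsUniformOn.not_isBenford {L R : ℝ} (hU : Measurable U) (h : IsUniformOn μ U L R)
    (hL : 0 < L) (hLR : L < R) (hR : R < 10 * L) : ¬ IsBenford μ U := by
  have hR₀ : 0 < R := hL.trans hLR
  have hgap : signif R < 10 * L / 10 ^ Int.log 10 R := by
    rw [signif_eq_div_zpow_log hR₀]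
    exact div_lt_div_of_pos_right hR (by positivity)
  obtain ⟨t, hRt, ht⟩ := exists_between (lt_min (signif_mem_Ico_s4 hR₀).2 hgap)
  refine not_isBenford_of_measure_signif_le_eq (signif_mem_Ico_s4 hR₀).1 hRt
    (ht.trans_le (min_le_left _ _)) (measure_congr (Eventually.set_eq ?_))
  filter_upwards [h.ae_mem_Ioc hU hLR] with ω hω
  rw [abs_of_pos (hL.trans hω.1)]
  refine ⟨fun hle => hle.trans hRt.le, fun hle => ?_⟩
  exact (signif_le_or_lt_of_mem_Ioc hL hω).resolve_right
    (not_lt.2 (hle.trans (ht.le.trans (min_le_right _ _))))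

end

theorem uniform_in_Icc_not_benford_general
    {Ω : Type*} [MeasurableSpace Ω] (μ : Measure Ω) [IsProbabilityMeasure μ]
    (a b : ℝ) (ha : 0 < 10 * a)
    (c : ℝ) (hc : c ∈ Set.Ioo 0 (b - 10 * a))
    (Y : Ω → ℝ) (hY : Measurable Y) (hunif : IsUniformOn μ Y (a + c) (10 * a + c)) :
    μ {ω | Y ω ∈ Set.Icc a b} = 1 ∧ ¬ IsBenford μ Y := by
  obtain ⟨hc₀, hcb⟩ := hc
  refine ⟨?_, hunif.not_isBenford hY (by linarith) (by linarith) (by linarith)⟩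
  refine (mem_ae_iff_prob_eq_one (hY measurableSet_Icc)).1 ?_
  filter_upwards [hunif.ae_mem_Ioc hY (by linarith)] with ω hω
  exact ⟨by linarith [hω.1], by linarith [hω.2]⟩

/-- If `b > 10a > 0` and `c ∈ (0, b − 10a)`, then `Y_c` uniformly distributed
on `[a+c, 10a+c]` has range contained in `[a, b]` and is not Benford. -/
theorem uniform_in_Icc_not_benford
    {Ω : Type*} [MeasurableSpace Ω] (μ : Measure Ω) [IsProbabilityMeasure μ]
    (a b : ℝ) (hab : 10 * a < b) (ha : 0 < 10 * a)
    (c : ℝ) (hc : c ∈ Set.Ioo 0 (b - 10 * a))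
    (Y : Ω → ℝ) (hY : Measurable Y) (hunif : IsUniformOn μ Y (a + c) (10 * a + c)) :
    μ {ω | Y ω ∈ Set.Icc a b} = 1 ∧ ¬ IsBenford μ Y :=
  uniform_in_Icc_not_benford_general μ a b ha c hc Y hY hunif
end

section
/- No uniformly distributed random variable is Benford: for all real numbers a < b, the random variable U[a,b] uniformly distributed on [a,b] is not Benford. -/
open MeasureTheory

/-!
On an interval `(c, d]` lying in a single decade `[10^k, 10^(k+1))` the significand is
`x ↦ x / 10^k`, so a Benford variable gives `(c, d]` mass at most
`log₁₀ (d / c) < (d - c) / (c log 10)`, while a uniform one gives it mass `(d - c) / (b - a)`.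
These are incompatible as soon as `c log 10 > b - a`. Since `log 10 > 2`, such an interval
exists near `b` if `b ≥ (b - a) / 2`, and otherwise near `a`, where one reflects `Y` to `-Y`.
-/

open Set Real Filter Topology

lemma signif_eq_div_zpow {x : ℝ} {k : ℤ} (hk : (10 : ℝ) ^ k ≤ x) (hk' : x < 10 ^ (k + 1)) :
    signif x = x / 10 ^ k := by
  have hx : 0 < x := (zpow_pos (by norm_num) k).trans_le hk
  have hlog : Int.log 10 x = k := by
    have h1 := (Int.zpow_le_iff_le_log (R := ℝ) (b := 10) (by norm_num) hx).1
      (by exact_mod_cast hk)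
    have h2 := (Int.lt_zpow_iff_log_lt (R := ℝ) (b := 10) (by norm_num) hx).1
      (by exact_mod_cast hk')
    omega
  have hfloor : ⌊logb 10 x⌋ = k := by
    rw [← hlog, ← Real.floor_logb_natCast hx.le]
    norm_num
  rw [signif, if_neg hx.ne', abs_of_pos hx, hfloor, zpow_neg, div_eq_mul_inv]

lemma logb_sub_logb_lt {β c d : ℝ} (hβ : 1 < β) (hc : 0 < c) (hcd : c < d) :
    logb β d - logb β c < (d - c) / (c * log β) := by
  have hdc : 0 < d / c := div_pos (hc.trans hcd) hc
  have hlog : log (d / c) < d / c - 1 := log_lt_sub_one_of_pos hdc ((one_lt_div hc).2 hcd).ne'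
  calc logb β d - logb β c = log (d / c) / log β := by
        rw [← logb_div (hc.trans hcd).ne' hc.ne', logb]
    _ < (d / c - 1) / log β := div_lt_div_of_pos_right hlog (log_pos hβ)
    _ = (d - c) / (c * log β) := by field_simp

lemma log_ten_gt_two : 2 < log 10 := by
  rw [lt_log_iff_exp_lt (by norm_num), show (2 : ℝ) = 1 + 1 by norm_num, exp_add]
  nlinarith [exp_one_lt_d9, exp_pos 1]

section

variable {Ω : Type*} [MeasurableSpace Ω] {μ : Measure Ω}

lemma IsBenford.neg {X : Ω → ℝ} (h : IsBenford μ X) : IsBenford μ (-X) := by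
  simpa [IsBenford, abs_neg] using h

lemma IsBenford.measure_le_logb_sub {X : Ω → ℝ} (h : IsBenford μ X) {s t : ℝ} (hs : 1 ≤ s)
    (hst : s ≤ t) (ht : t < 10) {E : Set Ω} (hE : MeasurableSet E)
    (hsub : ∀ ω ∈ E, signif |X ω| ∈ Ioc s t) :
    μ E ≤ ENNReal.ofReal (logb 10 t - logb 10 s) := by
  have hdisj : Disjoint {ω | signif |X ω| ≤ s} E :=
    disjoint_left.2 fun ω hω hωE => (hsub ω hωE).1.not_ge hω
  have hunion : {ω | signif |X ω| ≤ s} ∪ E ⊆ {ω | signif |X ω| ≤ t} := by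
    rintro ω (hω | hω)
    · exact le_trans hω hst
    · exact (hsub ω hω).2
  have hadd : ENNReal.ofReal (logb 10 s) + μ E ≤ ENNReal.ofReal (logb 10 t) := by
    rw [← h s ⟨hs, hst.trans_lt ht⟩, ← h t ⟨hs.trans hst, ht⟩, ← measure_union hdisj hE]
    exact measure_mono hunion
  rw [ENNReal.ofReal_sub _ (logb_nonneg (by norm_num) hs)]
  exact ENNReal.le_sub_of_add_le_left ENNReal.ofReal_ne_top hadd

variable {Y : Ω → ℝ} {a b : ℝ}

lemma IsUniformOn.measure_Ioc (h : IsUniformOn μ Y a b) (hY : Measurable Y) {c d : ℝ}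
    (hac : a ≤ c) (hcd : c ≤ d) (hdb : d ≤ b) :
    μ (Y ⁻¹' Ioc c d) = ENNReal.ofReal ((d - c) / (b - a)) := by
  have hba : 0 ≤ b - a := by linarith
  have hsplit : μ (Y ⁻¹' Iic d) = μ (Y ⁻¹' Iic c) + μ (Y ⁻¹' Ioc c d) := by
    rw [← measure_union ((Iic_disjoint_Ioc le_rfl).preimage Y) (hY measurableSet_Ioc),
      ← preimage_union, Iic_union_Ioc_eq_Iic hcd]
  have hd : μ (Y ⁻¹' Iic d) = _ := h d ⟨hac.trans hcd, hdb⟩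
  have hc : μ (Y ⁻¹' Iic c) = _ := h c ⟨hac, hcd.trans hdb⟩
  rw [show (d - a) / (b - a) = (c - a) / (b - a) + (d - c) / (b - a) by ring,
    ENNReal.ofReal_add (div_nonneg (by linarith) hba) (div_nonneg (by linarith) hba)] at hd
  rw [hd, hc] at hsplit
  exact ((ENNReal.add_right_inj ENNReal.ofReal_ne_top).1 hsplit).symm

lemma IsUniformOn.measure_lt (h : IsUniformOn μ Y a b) {x : ℝ} (hx : x ∈ Icc a b) :
    μ {ω | Y ω < x} = ENNReal.ofReal ((x - a) / (b - a)) := by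
  refine le_antisymm ((measure_mono fun ω (hω : Y ω < x) => hω.le).trans_eq (h x hx)) ?_
  rcases hx.1.eq_or_lt with rfl | hax
  · simp
  have hcont : Tendsto (fun y => ENNReal.ofReal ((y - a) / (b - a))) (𝓝[<] x)
      (𝓝 (ENNReal.ofReal ((x - a) / (b - a)))) :=
    ((ENNReal.continuous_ofReal.comp ((continuous_id.sub continuous_const).div_const _)).tendsto
      x).mono_left nhdsWithin_le_nhds
  refine le_of_tendsto hcont ?_
  filter_upwards [Ioo_mem_nhdsLT hax] with y hy
  rw [← h y ⟨hy.1.le, hy.2.le.trans hx.2⟩]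
  exact measure_mono fun ω (hω : Y ω ≤ y) => hω.trans_lt hy.2

lemma IsUniformOn.neg [IsProbabilityMeasure μ] (h : IsUniformOn μ Y a b) (hY : Measurable Y)
    (hab : a < b) : IsUniformOn μ (-Y) (-b) (-a) := by
  intro x hx
  have hcompl : {ω | (-Y) ω ≤ x} = {ω | Y ω < -x}ᶜ := by
    ext ω; simp [neg_le]
  rw [hcompl, prob_compl_eq_one_sub (measurableSet_lt hY measurable_const),
    h.measure_lt ⟨by linarith [hx.2], by linarith [hx.1]⟩, ← ENNReal.ofReal_one,
    ← ENNReal.ofReal_sub _ (div_nonneg (by linarith [hx.2]) (by linarith))]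
  have hba : b - a ≠ 0 := by linarith
  rw [neg_sub_neg]
  congr 1
  field_simp
  ring

lemma IsUniformOn.not_isBenford_of_sub_lt_mul_log (h : IsUniformOn μ Y a b) (hY : Measurable Y)
    (hab : a < b) (hb : b - a < b * log 10) : ¬ IsBenford μ Y := by
  intro hben
  have hL : 0 < log 10 := log_pos (by norm_num)
  obtain ⟨c, hc, hcb⟩ := exists_between (max_lt hab ((div_lt_iff₀ hL).2 hb))
  have hac : a < c := (le_max_left _ _).trans_lt hc
  have hrc : b - a < c * log 10 := (div_lt_iff₀ hL).1 ((le_max_right _ _).trans_lt hc)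
  have hc0 : 0 < c := by nlinarith
  set k := Int.log 10 c
  have hk : (10 : ℝ) ^ k ≤ c := by exact_mod_cast Int.zpow_log_le_self (by norm_num) hc0
  have hk' : c < (10 : ℝ) ^ (k + 1) := by exact_mod_cast Int.lt_zpow_succ_log_self (by norm_num) c
  obtain ⟨d, hcd, hd⟩ := exists_between (lt_min hcb hk')
  obtain ⟨hdb, hdk⟩ := lt_min_iff.1 hd
  have h10k : (0 : ℝ) < 10 ^ k := zpow_pos (by norm_num) k
  have hsignif : ∀ ω ∈ Y ⁻¹' Ioc c d, signif |Y ω| ∈ Ioc (c / 10 ^ k) (d / 10 ^ k) := by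
    rintro ω ⟨hcω, hωd⟩
    rw [abs_of_pos (hc0.trans hcω), signif_eq_div_zpow (hk.trans hcω.le) (hωd.trans_lt hdk)]
    exact ⟨by gcongr, by gcongr⟩
  have hd10 : d / 10 ^ k < 10 :=
    (div_lt_iff₀ h10k).2 (by rwa [mul_comm, ← zpow_add_one₀ (by norm_num)])
  have hbound := hben.measure_le_logb_sub ((one_le_div h10k).2 hk) (by gcongr) hd10
    (hY measurableSet_Ioc) hsignif
  have hshift : logb 10 (d / 10 ^ k) - logb 10 (c / 10 ^ k) = logb 10 d - logb 10 c := by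
    rw [logb_div (hc0.trans hcd).ne' h10k.ne', logb_div hc0.ne' h10k.ne']
    ring
  rw [h.measure_Ioc hY hac.le hcd.le hdb.le, hshift, ENNReal.ofReal_le_ofReal_iff
    (sub_nonneg.2 (logb_le_logb_of_le (by norm_num) hc0 hcd.le))] at hbound
  have hlt : (d - c) / (c * log 10) < (d - c) / (b - a) :=
    div_lt_div_of_pos_left (by linarith) (by linarith) hrc
  linarith [logb_sub_logb_lt (β := 10) (by norm_num) hc0 hcd]

end

/-- No uniformly distributed random variable is Benford: for all `a < b`,
a random variable uniform on `[a,b]` is not Benford. -/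
theorem uniform_not_benford
    {Ω : Type*} [MeasurableSpace Ω] (μ : Measure Ω) [IsProbabilityMeasure μ]
    (a b : ℝ) (hab : a < b)
    (Y : Ω → ℝ) (hY : Measurable Y) (hunif : IsUniformOn μ Y a b) :
    ¬ IsBenford μ Y := by
  intro hben
  rcases lt_or_ge (b - a) (b * log 10) with hb | hb
  · exact hunif.not_isBenford_of_sub_lt_mul_log hY hab hb hben
  · have ha : -a - -b < -a * log 10 := by
      nlinarith [log_ten_gt_two]
    exact (hunif.neg hY hab).not_isBenford_of_sub_lt_mul_log hY.neg (neg_lt_neg hab) ha hben.neg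
end

section
/- Let a, b be real numbers with b > 10a > 0, and let 0 < c₁ < c₂ < b/10 − a. Then, with U uniformly distributed on [0,1], the Benford random variables X_{c₁} = (a + c₁)·10^U and X_{c₂} = (a + c₂)·10^U have different distributions; consequently, the set of Benford probability distributions with range contained in [a, b] is infinite. -/
/-! If `Y` is uniform on an interval `(c, c + 1]`, the significand of `10 ^ Y` is
`10 ^ fract Y`, and `fract Y` is uniform on `[0, 1)` because any interval of length one is a
fundamental domain for the translation action of `ℤ` on `ℝ`; hence `10 ^ Y` is Benford. Its law
lives on `[10 ^ c, 10 ^ (c + 1)]` and gives `Iic (10 ^ d)` the mass `min (c + 1) d - c`, so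
distinct `c` give distinct laws. For `U` uniform on `[0, 1]`, `(a + c) * 10 ^ U` is the case
`Y = log₁₀ (a + c) + U`; letting `c` range over `[log₁₀ a, log₁₀ b - 1]` gives infinitely many
Benford laws on `[a, b]`. -/

open MeasureTheory

/-- A probability measure `ν` on `ℝ` is Benford if
`ν {x : S(|x|) ≤ t} = log₁₀ t` for all `t ∈ [1,10)`. -/
def IsBenfordMeasure (ν : Measure ℝ) : Prop :=
  ∀ t ∈ Set.Ico (1 : ℝ) 10,
    ν {x | signif |x| ≤ t} = ENNReal.ofReal (Real.logb 10 t)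

open Set Real ProbabilityTheory

lemma measurable_signif : Measurable signif := by
  unfold signif logb
  exact Measurable.ite (measurableSet_singleton 0) measurable_const (by fun_prop)

lemma signif_rpow (y : ℝ) : signif (10 ^ y) = 10 ^ Int.fract y := by
  have hpos : (0 : ℝ) < 10 ^ y := by positivity
  rw [signif, if_neg hpos.ne', abs_of_pos hpos, logb_rpow (by norm_num) (by norm_num),
    ← rpow_intCast, ← rpow_add (by norm_num), Int.fract]
  push_cast
  ring_nf

lemma measurable_rpow_ten : Measurable fun y : ℝ => (10 : ℝ) ^ y := by fun_prop

theorem IsUniformOn.map_eq_cond {Ω : Type*} [MeasurableSpace Ω] {μ : Measure Ω}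
    [IsProbabilityMeasure μ] {U : Ω → ℝ} {a b : ℝ} (hab : a < b) (hU : Measurable U)
    (hunif : IsUniformOn μ U a b) : μ.map U = volume[|Ioc a b] := by
  have : IsProbabilityMeasure (μ.map U) := Measure.isProbabilityMeasure_map hU.aemeasurable
  refine Measure.ext_of_Iic _ _ fun x => ?_
  rw [Measure.map_apply hU measurableSet_Iic, cond_apply measurableSet_Ioc, Ioc_inter_Iic,
    Real.volume_Ioc, Real.volume_Ioc, ← ENNReal.div_eq_inv_mul]
  change μ {ω | U ω ≤ x} = _
  have cdf_mono {s t : ℝ} (hst : s ≤ t) : μ {ω | U ω ≤ s} ≤ μ {ω | U ω ≤ t} :=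
    measure_mono fun ω (h : U ω ≤ s) => h.trans hst
  rcases lt_or_ge x a with hxa | hax
  · have h0 : μ {ω | U ω ≤ a} = 0 := by simpa using hunif a ⟨le_rfl, hab.le⟩
    rw [nonpos_iff_eq_zero.1 ((cdf_mono hxa.le).trans_eq h0), min_eq_right (by linarith),
      ENNReal.ofReal_of_nonpos (by linarith), ENNReal.zero_div]
  rcases le_or_gt x b with hxb | hbx
  · rw [min_eq_right hxb, ← ENNReal.ofReal_div_of_pos (by linarith)]
    exact hunif x ⟨hax, hxb⟩
  · have h1 : μ {ω | U ω ≤ b} = 1 := by simpa [(sub_pos.2 hab).ne'] using hunif b ⟨hab.le, le_rfl⟩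
    rw [le_antisymm prob_le_one (h1 ▸ cdf_mono hbx.le), min_eq_left hbx.le,
      ENNReal.div_self (by simpa using hab) ENNReal.ofReal_ne_top]

lemma map_add_volume_restrict_Ioc (c s t : ℝ) :
    (volume.restrict (Ioc s t)).map (c + ·) = volume.restrict (Ioc (c + s) (c + t)) := by
  ext A hA
  rw [Measure.map_apply (measurable_const_add c) hA, Measure.restrict_apply hA,
    Measure.restrict_apply (measurable_const_add c hA),
    ← measure_preimage_add volume c (A ∩ _), preimage_inter, preimage_const_add_Ioc]
  simp

lemma volume_fract_le_inter_Ioc (c : ℝ) {τ : ℝ} (hτ : τ < 1) :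
    volume ({y | Int.fract y ≤ τ} ∩ Ioc c (c + 1)) = ENNReal.ofReal τ := by
  have hmeas : MeasurableSet {y : ℝ | Int.fract y ≤ τ} :=
    measurableSet_le measurable_fract measurable_const
  have hperiodic (g : AddSubgroup.zmultiples (1 : ℝ)) :
      (fun y => g +ᵥ y) ⁻¹' {y | Int.fract y ≤ τ} = {y | Int.fract y ≤ τ} := by
    obtain ⟨_, n, rfl⟩ := g
    ext y
    simp [AddSubgroup.vadd_def]
  rw [(isAddFundamentalDomain_Ioc one_pos c volume).measure_set_eq
    (isAddFundamentalDomain_Ioc one_pos 0 volume) hmeas hperiodic, zero_add,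
    ← Measure.restrict_apply' measurableSet_Ioc, ← Measure.restrict_congr_set Ioo_ae_eq_Ioc,
    Measure.restrict_apply' measurableSet_Ioo]
  have hset : {y : ℝ | Int.fract y ≤ τ} ∩ Ioo 0 1 = Ioc 0 τ := by
    ext y
    simp only [mem_inter_iff, mem_ofPred_eq, mem_Ioo, mem_Ioc]
    constructor
    · rintro ⟨hfr, h0, h1⟩
      exact ⟨h0, by rwa [Int.fract_eq_self.2 ⟨h0.le, h1⟩] at hfr⟩
    · rintro ⟨h0, hyτ⟩
      have h1 : y < 1 := hyτ.trans_lt hτ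
      exact ⟨by rwa [Int.fract_eq_self.2 ⟨h0.le, h1⟩], h0, h1⟩
  rw [hset, Real.volume_Ioc, sub_zero]

noncomputable def benfordLaw (c : ℝ) : Measure ℝ :=
  (volume.restrict (Ioc c (c + 1))).map fun y => (10 : ℝ) ^ y

instance isProbabilityMeasure_benfordLaw (c : ℝ) : IsProbabilityMeasure (benfordLaw c) := by
  have : IsProbabilityMeasure (volume.restrict (Ioc c (c + 1))) := ⟨by simp⟩
  exact Measure.isProbabilityMeasure_map measurable_rpow_ten.aemeasurable

theorem IsUniformOn.map_const_mul_rpow {Ω : Type*} [MeasurableSpace Ω] {μ : Measure Ω}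
    [IsProbabilityMeasure μ] {U : Ω → ℝ} (hU : Measurable U) (hunif : IsUniformOn μ U 0 1)
    {m : ℝ} (hm : 0 < m) :
    μ.map (fun ω => m * (10 : ℝ) ^ U ω) = benfordLaw (logb 10 m) := by
  have hfactor : (fun u => m * (10 : ℝ) ^ u) = (fun y => (10 : ℝ) ^ y) ∘ (logb 10 m + ·) := by
    ext u
    simp [rpow_add, rpow_logb, hm]
  have hlaw : μ.map U = volume.restrict (Ioc 0 1) := by
    rw [hunif.map_eq_cond zero_lt_one hU, ProbabilityTheory.cond, Real.volume_Ioc]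
    simp
  change μ.map ((fun u => m * (10 : ℝ) ^ u) ∘ U) = _
  rw [← Measure.map_map (by fun_prop) hU, hlaw, hfactor,
    ← Measure.map_map measurable_rpow_ten (measurable_const_add _),
    map_add_volume_restrict_Ioc, add_zero, benfordLaw]

lemma isBenfordMeasure_benfordLaw (c : ℝ) : IsBenfordMeasure (benfordLaw c) := by
  rintro t ⟨ht1, ht10⟩
  have ht0 : 0 < t := by linarith
  have hpre : (fun y : ℝ => (10 : ℝ) ^ y) ⁻¹' {x | signif |x| ≤ t} =
      {y | Int.fract y ≤ logb 10 t} := by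
    ext y
    simp [abs_of_pos (rpow_pos_of_pos (by norm_num : (0:ℝ) < 10) y), signif_rpow,
      le_logb_iff_rpow_le (by norm_num : (1:ℝ) < 10) ht0]
  have hmeas : MeasurableSet {x : ℝ | signif |x| ≤ t} :=
    measurableSet_le (measurable_signif.comp measurable_abs) measurable_const
  rw [benfordLaw, Measure.map_apply measurable_rpow_ten hmeas, hpre,
    Measure.restrict_apply (measurableSet_le measurable_fract measurable_const),
    volume_fract_le_inter_Ioc]
  rw [logb_lt_iff_lt_rpow (by norm_num) ht0]
  simpa using ht10

lemma benfordLaw_compl_Icc {c a b : ℝ} (ha : a ≤ 10 ^ c) (hb : 10 ^ (c + 1) ≤ b) :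
    benfordLaw c (Icc a b)ᶜ = 0 := by
  rw [benfordLaw, Measure.map_apply measurable_rpow_ten measurableSet_Icc.compl,
    Measure.restrict_apply (measurable_rpow_ten measurableSet_Icc.compl)]
  convert measure_empty (μ := volume)
  refine eq_empty_of_forall_notMem fun y ⟨hy, hyc, hyc'⟩ => hy ⟨?_, ?_⟩
  · exact ha.trans (rpow_le_rpow_of_exponent_le (by norm_num) hyc.le)
  · exact (rpow_le_rpow_of_exponent_le (by norm_num) hyc').trans hb

lemma benfordLaw_Iic_rpow (c d : ℝ) :
    benfordLaw c (Iic (10 ^ d)) = ENNReal.ofReal (min (c + 1) d - c) := by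
  have hpre : (fun y : ℝ => (10 : ℝ) ^ y) ⁻¹' Iic (10 ^ d) = Iic d := by
    ext y
    simp [rpow_le_rpow_left_iff]
  rw [benfordLaw, Measure.map_apply measurable_rpow_ten measurableSet_Iic, hpre,
    Measure.restrict_apply measurableSet_Iic, inter_comm, Ioc_inter_Iic, Real.volume_Ioc]

lemma benfordLaw_injective : Function.Injective benfordLaw := by
  have key {c d : ℝ} (hcd : c < d) : benfordLaw c ≠ benfordLaw d := fun h => by
    have := congrArg (· (Iic (10 ^ d))) h
    simp only [benfordLaw_Iic_rpow, min_eq_right (le_add_of_nonneg_right zero_le_one),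
      sub_self, ENNReal.ofReal_zero, ENNReal.ofReal_eq_zero] at this
    exact this.not_gt (sub_pos.2 (lt_min (lt_add_one c) hcd))
  intro c d h
  by_contra hne
  rcases lt_or_gt_of_ne hne with hcd | hdc
  exacts [key hcd h, key hdc h.symm]

theorem infinitely_many_benford_distributions_general
    {Ω : Type*} [MeasurableSpace Ω] (μ : Measure Ω) [IsProbabilityMeasure μ]
    (a b c₁ c₂ : ℝ) (hab : 10 * a < b) (ha : 0 < 10 * a)
    (hc₁ : 0 < c₁) (hc₁₂ : c₁ < c₂)
    (U : Ω → ℝ) (hU : Measurable U) (hunif : IsUniformOn μ U 0 1) :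
    Measure.map (fun ω => (a + c₁) * (10 : ℝ) ^ (U ω)) μ ≠
        Measure.map (fun ω => (a + c₂) * (10 : ℝ) ^ (U ω)) μ ∧
      {ν : Measure ℝ | IsProbabilityMeasure ν ∧ ν (Set.Icc a b)ᶜ = 0 ∧
        IsBenfordMeasure ν}.Infinite := by
  have ha₀ : 0 < a := by linarith
  refine ⟨?_, ?_⟩
  · rw [hunif.map_const_mul_rpow hU (by linarith), hunif.map_const_mul_rpow hU (by linarith)]
    exact benfordLaw_injective.ne (logb_lt_logb (by norm_num) (by linarith) (by linarith)).ne
  · have hlog : logb 10 a < logb 10 b - 1 := by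
      have := logb_lt_logb (b := 10) (by norm_num) ha hab
      rwa [logb_mul (by norm_num) ha₀.ne', logb_self_eq_one (by norm_num),
        ← lt_sub_iff_add_lt'] at this
    refine ((Icc_infinite hlog).image benfordLaw_injective.injOn).mono ?_
    rintro _ ⟨c, ⟨hac, hcb⟩, rfl⟩
    refine ⟨inferInstance, benfordLaw_compl_Icc ?_ ?_, isBenfordMeasure_benfordLaw c⟩
    · rwa [← logb_le_iff_le_rpow (by norm_num) ha₀]
    · rwa [← le_logb_iff_rpow_le (by norm_num) (by linarith), ← le_sub_iff_add_le]

/-- If `b > 10a > 0` and `0 < c₁ < c₂ < b/10 − a`, then the Benford random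
variables `X_{c₁} = (a+c₁)·10^U` and `X_{c₂} = (a+c₂)·10^U` (with `U` uniform
on `[0,1]`) have different distributions; consequently the set of Benford
probability distributions supported in `[a,b]` is infinite. -/
theorem infinitely_many_benford_distributions
    {Ω : Type*} [MeasurableSpace Ω] (μ : Measure Ω) [IsProbabilityMeasure μ]
    (a b c₁ c₂ : ℝ) (hab : 10 * a < b) (ha : 0 < 10 * a)
    (hc₁ : 0 < c₁) (hc₁₂ : c₁ < c₂) (hc₂ : c₂ < b / 10 - a)
    (U : Ω → ℝ) (hU : Measurable U) (hunif : IsUniformOn μ U 0 1) :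
    Measure.map (fun ω => (a + c₁) * (10 : ℝ) ^ (U ω)) μ ≠
        Measure.map (fun ω => (a + c₂) * (10 : ℝ) ^ (U ω)) μ ∧
      {ν : Measure ℝ | IsProbabilityMeasure ν ∧ ν (Set.Icc a b)ᶜ = 0 ∧
        IsBenfordMeasure ν}.Infinite :=
  infinitely_many_benford_distributions_general μ a b c₁ c₂ hab ha hc₁ hc₁₂ U hU hunif
end
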